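/- arXiv:1901.09330 — 5 statements merged into one kernel-verified Lean document; each statement's English description precedes it below -/
import Mathlib

section
/- For a potential-based shaping function F(s,a,s') = γΦ(s') − Φ(s) added to the reward of an MDP, the optimal Q-function of the shaped MDP satisfies Q*_{M'}(s,a) = Q*_M(s,a) − Φ(s) for all states s and actions a. -/
private lemma ciSup_sub_const {A : Type*} [Fintype A] [Nonempty A]
    (g : A → ℝ) (c : ℝ) : (⨆ a, (g a - c)) = (⨆ a, g a) - c := by
  apply le_antisymm
  · exact ciSup_le fun a => sub_le_sub_right
      (le_ciSup (Set.Finite.bddAbove (Set.finite_range g)) a) c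
  · rw [sub_le_iff_le_add]
    refine ciSup_le fun a => ?_
    have := le_ciSup (Set.Finite.bddAbove (Set.finite_range (fun a => g a - c))) a
    linarith
private lemma abs_ciSup_sub {A : Type*} [Fintype A] [Nonempty A]
    (u v : A → ℝ) (C : ℝ) (h : ∀ a, |u a - v a| ≤ C) :
    |(⨆ a, u a) - ⨆ a, v a| ≤ C := by
  rw [abs_sub_le_iff]
  constructor
  · rw [sub_le_iff_le_add]
    refine ciSup_le fun a => ?_
    have h1 := le_ciSup (Set.Finite.bddAbove (Set.finite_range v)) a
    have := abs_le.mp (h a)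
    linarith
  · rw [sub_le_iff_le_add]
    refine ciSup_le fun a => ?_
    have h1 := le_ciSup (Set.Finite.bddAbove (Set.finite_range u)) a
    have := abs_le.mp (h a)
    linarith

/-- Policy invariance under potential-based reward shaping (Q-values):
if `Q` is the optimal Q-function of `M` (fixed point of the Bellman optimality
operator) and `Q'` is the optimal Q-function of the MDP shaped with potential `Φ`,
then `Q' s a = Q s a - Φ s` for all `s, a`. -/
theorem shaped_optimal_Q_shift
    {S A : Type*} [Fintype S] [Fintype A] [Nonempty A]
    (T : S → A → S → ℝ)
    (hT0 : ∀ s a s', 0 ≤ T s a s')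
    (hT1 : ∀ s a, ∑ s', T s a s' = 1)
    (γ : ℝ) (hγ0 : 0 ≤ γ) (hγ1 : γ < 1)
    (R : S → A → S → ℝ) (Φ : S → ℝ)
    (Q Q' : S → A → ℝ)
    (hQ : ∀ s a, Q s a = ∑ s', T s a s' * (R s a s' + γ * ⨆ a', Q s' a'))
    (hQ' : ∀ s a, Q' s a =
      ∑ s', T s a s' * ((R s a s' + γ * Φ s' - Φ s) + γ * ⨆ a', Q' s' a')) :
    ∀ s a, Q' s a = Q s a - Φ s := by
  intro s a
  haveI : Nonempty S := ⟨s⟩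
  set f : S × A → ℝ := fun p => |Q' p.1 p.2 - (Q p.1 p.2 - Φ p.1)| with hf
  obtain ⟨p0, hp0⟩ := Finite.exists_max f
  -- key recurrence: for any (s,a), the difference is γ * weighted sum of sup-differences
  have key : ∀ s a, Q' s a - (Q s a - Φ s) =
      γ * ∑ s', T s a s' * ((⨆ a', Q' s' a') - ((⨆ a', Q s' a') - Φ s')) := by
    intro s a
    have hΦ : Φ s = ∑ s', T s a s' * Φ s := by
      rw [← Finset.sum_mul, hT1, one_mul]
    conv_lhs => rw [hΦ, hQ' s a, hQ s a]
    rw [Finset.mul_sum, ← Finset.sum_sub_distrib, ← Finset.sum_sub_distrib]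
    apply Finset.sum_congr rfl
    intro s' _
    ring
  -- bound at the maximizer
  have hb : ∀ s', |(⨆ a', Q' s' a') - ((⨆ a', Q s' a') - Φ s')| ≤ f p0 := by
    intro s'
    have := ciSup_sub_const (fun a' => Q s' a') (Φ s')
    rw [← this]
    exact abs_ciSup_sub _ _ _ (fun a' => hp0 (s', a'))
  have hmax : f p0 ≤ γ * f p0 := by
    calc f p0 = |Q' p0.1 p0.2 - (Q p0.1 p0.2 - Φ p0.1)| := rfl
      _ = |γ * ∑ s', T p0.1 p0.2 s' *
        ((⨆ a', Q' s' a') - ((⨆ a', Q s' a') - Φ s'))| := by rw [key]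
      _ = γ * |∑ s', T p0.1 p0.2 s' *
        ((⨆ a', Q' s' a') - ((⨆ a', Q s' a') - Φ s'))| := by
          rw [abs_mul, abs_of_nonneg hγ0]
      _ ≤ γ * ∑ s', T p0.1 p0.2 s' * f p0 := by
          apply mul_le_mul_of_nonneg_left _ hγ0
          refine (Finset.abs_sum_le_sum_abs _ _).trans ?_
          apply Finset.sum_le_sum
          intro s' _
          rw [abs_mul, abs_of_nonneg (hT0 _ _ _)]
          exact mul_le_mul_of_nonneg_left (hb s') (hT0 _ _ _)
      _ = γ * f p0 := by rw [← Finset.sum_mul, hT1, one_mul]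
  have h0 : 0 ≤ f p0 := abs_nonneg _
  have hz : f p0 = 0 := by nlinarith
  have : f (s, a) = 0 := le_antisymm (hz ▸ hp0 (s, a)) (abs_nonneg _)
  have := abs_eq_zero.mp this
  linarith
end

section
/- For a potential-based shaping function F(s,a,s') = γΦ(s') − Φ(s), the optimal value function of the shaped MDP satisfies V*_{M'}(s) = V*_M(s) − Φ(s) for all states s. -/
/-- Policy invariance under potential-based reward shaping (V-values):
the optimal value function of the shaped MDP satisfies
`V*_{M'} s = V*_M s - Φ s`, where `V* s = ⨆ a, Q* s a`. -/
theorem shaped_optimal_V_shift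
    {S A : Type*} [Fintype S] [Fintype A] [Nonempty A]
    (T : S → A → S → ℝ)
    (hT0 : ∀ s a s', 0 ≤ T s a s')
    (hT1 : ∀ s a, ∑ s', T s a s' = 1)
    (γ : ℝ) (hγ0 : 0 ≤ γ) (hγ1 : γ < 1)
    (R : S → A → S → ℝ) (Φ : S → ℝ)
    (Q Q' : S → A → ℝ)
    (hQ : ∀ s a, Q s a = ∑ s', T s a s' * (R s a s' + γ * ⨆ a', Q s' a'))
    (hQ' : ∀ s a, Q' s a =
      ∑ s', T s a s' * ((R s a s' + γ * Φ s' - Φ s) + γ * ⨆ a', Q' s' a')) :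
    ∀ s, (⨆ a, Q' s a) = (⨆ a, Q s a) - Φ s := by
  intro s₀
  haveI : Nonempty S := ⟨s₀⟩
  have bdd : ∀ (f : A → ℝ), BddAbove (Set.range f) :=
    fun f => (Set.finite_range f).bddAbove
  set D : S → A → ℝ := fun s a => Q' s a - Q s a + Φ s with hD
  set M : ℝ := Finset.univ.sup' Finset.univ_nonempty
    (fun p : S × A => |D p.1 p.2|) with hM
  have hMle : ∀ s a, |D s a| ≤ M := fun s a =>
    Finset.le_sup' (fun p : S × A => |D p.1 p.2|) (Finset.mem_univ (s, a))
  have hM0 : 0 ≤ M := le_trans (abs_nonneg _) (hMle s₀ (Classical.arbitrary A))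
  -- bound on the value-difference
  have hE : ∀ s', |(⨆ a', Q' s' a') - (⨆ a', Q s' a') + Φ s'| ≤ M := by
    intro s'
    rw [abs_le]
    constructor
    · rw [neg_le, ← sub_nonneg]
      have : (⨆ a', Q s' a') ≤ (⨆ a', Q' s' a') + Φ s' + M := by
        apply ciSup_le
        intro a
        have h1 := (abs_le.mp (hMle s' a)).1
        have h2 : Q' s' a ≤ ⨆ a', Q' s' a' := le_ciSup (bdd _) a
        simp only [hD] at h1
        linarith
      linarith
    · rw [← sub_nonneg]
      have : (⨆ a', Q' s' a') ≤ (⨆ a', Q s' a') - Φ s' + M := by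
        apply ciSup_le
        intro a
        have h1 := (abs_le.mp (hMle s' a)).2
        have h2 : Q s' a ≤ ⨆ a', Q s' a' := le_ciSup (bdd _) a
        simp only [hD] at h1
        linarith
      linarith
  -- Bellman identity for D
  have hDeq : ∀ s a,
      D s a = γ * ∑ s', T s a s' *
        ((⨆ a', Q' s' a') - (⨆ a', Q s' a') + Φ s') := by
    intro s a
    have h1 := hT1 s a
    simp only [hD]
    rw [hQ s a, hQ' s a, ← Finset.sum_sub_distrib]
    have hterm : ∀ s' ∈ Finset.univ,
        T s a s' * ((R s a s' + γ * Φ s' - Φ s) + γ * ⨆ a', Q' s' a')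
          - T s a s' * (R s a s' + γ * ⨆ a', Q s' a')
        = γ * (T s a s' * ((⨆ a', Q' s' a') - (⨆ a', Q s' a') + Φ s'))
            - T s a s' * Φ s := by
      intro s' _
      ring
    rw [Finset.sum_congr rfl hterm, Finset.sum_sub_distrib,
      ← Finset.mul_sum, ← Finset.sum_mul, h1]
    ring
  -- contraction: M ≤ γ M
  have hcontr : M ≤ γ * M := by
    rw [hM]
    apply Finset.sup'_le
    intro p _
    rw [hDeq p.1 p.2, abs_mul, abs_of_nonneg hγ0]
    apply mul_le_mul_of_nonneg_left _ hγ0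
    calc |∑ s', T p.1 p.2 s' * ((⨆ a', Q' s' a') - (⨆ a', Q s' a') + Φ s')|
        ≤ ∑ s', |T p.1 p.2 s' * ((⨆ a', Q' s' a') - (⨆ a', Q s' a') + Φ s')| :=
          Finset.abs_sum_le_sum_abs _ _
      _ ≤ ∑ s', T p.1 p.2 s' * M := by
          apply Finset.sum_le_sum
          intro s' _
          rw [abs_mul, abs_of_nonneg (hT0 p.1 p.2 s')]
          exact mul_le_mul_of_nonneg_left (hE s') (hT0 p.1 p.2 s')
      _ = M := by rw [← Finset.sum_mul, hT1, one_mul]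
  have hMzero : M = 0 := by nlinarith
  have hQ'eq : ∀ a, Q' s₀ a = Q s₀ a - Φ s₀ := by
    intro a
    have := hMle s₀ a
    rw [hMzero] at this
    have := abs_nonpos_iff.mp this
    simp only [hD] at this
    linarith
  simp only [hQ'eq]
  apply le_antisymm
  · apply ciSup_le
    intro a
    have : Q s₀ a ≤ ⨆ a', Q s₀ a' := le_ciSup (bdd _) a
    linarith
  · rw [sub_le_iff_le_add]
    apply ciSup_le
    intro a
    have : Q s₀ a - Φ s₀ ≤ ⨆ a', (Q s₀ a' - Φ s₀) := le_ciSup (bdd (fun a' => Q s₀ a' - Φ s₀)) a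
    linarith
end

section
/- If the potential function is chosen as Φ = V*_M (the optimal value function of M), then the optimal value function of the shaped MDP is identically zero: V*_{M'}(s) = 0 for all s. -/
/-- If the potential function is chosen as `Φ = V*_M`, then the optimal value
function of the shaped MDP is identically zero. -/
theorem shaped_optimal_V_zero
    {S A : Type*} [Fintype S] [Fintype A] [Nonempty A]
    (T : S → A → S → ℝ)
    (hT0 : ∀ s a s', 0 ≤ T s a s')
    (hT1 : ∀ s a, ∑ s', T s a s' = 1)
    (γ : ℝ) (hγ0 : 0 ≤ γ) (hγ1 : γ < 1)
    (R : S → A → S → ℝ)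
    (Q Q' : S → A → ℝ)
    (hQ : ∀ s a, Q s a = ∑ s', T s a s' * (R s a s' + γ * ⨆ a', Q s' a'))
    (hQ' : ∀ s a, Q' s a =
      ∑ s', T s a s' *
        ((R s a s' + γ * (⨆ a', Q s' a') - ⨆ a', Q s a') + γ * ⨆ a', Q' s' a')) :
    ∀ s, (⨆ a, Q' s a) = 0 := by
  intro s0
  haveI : Nonempty S := ⟨s0⟩
  set V : S → ℝ := fun s => ⨆ a, Q s a with hV
  set V' : S → ℝ := fun s => ⨆ a, Q' s a with hV'
  have bddQ : ∀ s, BddAbove (Set.range (Q s)) := fun s => (Set.finite_range _).bddAbove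
  have bddQ' : ∀ s, BddAbove (Set.range (Q' s)) := fun s => (Set.finite_range _).bddAbove
  -- key decomposition
  have key : ∀ s a, Q' s a = (Q s a - V s) + γ * ∑ s', T s a s' * V' s' := by
    intro s a
    have h1 := hQ' s a
    have h2 := hQ s a
    rw [h1]
    calc ∑ s', T s a s' * ((R s a s' + γ * V s' - V s) + γ * V' s')
        = (∑ s', T s a s' * (R s a s' + γ * V s')) - (∑ s', T s a s') * V s
            + γ * ∑ s', T s a s' * V' s' := by
          rw [Finset.sum_mul, Finset.mul_sum, ← Finset.sum_sub_distrib, ← Finset.sum_add_distrib]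
          exact Finset.sum_congr rfl (fun s' _ => by ring)
      _ = Q s a - V s + γ * ∑ s', T s a s' * V' s' := by rw [hT1, ← h2]; ring
  -- max of |V'|
  obtain ⟨sM, hsM⟩ := Finite.exists_max (fun s => |V' s|)
  set M : ℝ := |V' sM| with hM
  have hM0 : 0 ≤ M := abs_nonneg _
  have sum_bound : ∀ s a, |∑ s', T s a s' * V' s'| ≤ M := by
    intro s a
    calc |∑ s', T s a s' * V' s'| ≤ ∑ s', |T s a s' * V' s'| := Finset.abs_sum_le_sum_abs _ _
      _ ≤ ∑ s', T s a s' * M := by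
          apply Finset.sum_le_sum
          intro s' _
          rw [abs_mul, abs_of_nonneg (hT0 s a s')]
          exact mul_le_mul_of_nonneg_left (hsM s') (hT0 s a s')
      _ = M := by rw [← Finset.sum_mul, hT1, one_mul]
  have hVle : ∀ s a, Q s a ≤ V s := fun s a => le_ciSup (bddQ s) a
  -- upper bound on V'
  have hupper : ∀ s, V' s ≤ γ * M := by
    intro s
    apply ciSup_le
    intro a
    rw [key s a]
    have h1 : Q s a - V s ≤ 0 := sub_nonpos.mpr (hVle s a)
    have h2 : γ * ∑ s', T s a s' * V' s' ≤ γ * M :=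
      mul_le_mul_of_nonneg_left ((abs_le.mp (sum_bound s a)).2) hγ0
    linarith
  -- lower bound on V'
  have hlower : ∀ s, -(γ * M) ≤ V' s := by
    intro s
    obtain ⟨aM, haM⟩ := Finite.exists_max (fun a => Q s a)
    have hVs : V s = Q s aM := le_antisymm (ciSup_le haM) (hVle s aM)
    have : -(γ * M) ≤ Q' s aM := by
      rw [key s aM, hVs]
      have h2 : -(γ * M) ≤ γ * ∑ s', T s aM s' * V' s' := by
        have := mul_le_mul_of_nonneg_left ((abs_le.mp (sum_bound s aM)).1) hγ0
        linarith
      linarith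
    exact this.trans (le_ciSup (bddQ' s) aM)
  have habs : ∀ s, |V' s| ≤ γ * M := fun s => abs_le.mpr ⟨hlower s, hupper s⟩
  have hMle : M ≤ γ * M := habs sM
  have hMz : M = 0 := by nlinarith
  have := habs s0
  rw [hMz, mul_zero] at this
  exact abs_nonpos_iff.mp this
end

section
/- For any policy π (not just the optimal one), potential-based shaping shifts the policy value function by the potential: V^π_{M'}(s) = V^π_M(s) − Φ(s) and Q^π_{M'}(s,a) = Q^π_M(s,a) − Φ(s) for all (s,a). -/
/-- For any stationary policy `π`, potential-based shaping shifts the policy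
value functions by the potential: `Q^π_{M'} = Q^π_M - Φ∘π₁` and
`V^π_{M'} = V^π_M - Φ`. -/
theorem policy_evaluation_shift
    {S A : Type*} [Fintype S] [Fintype A] [Nonempty A]
    (T : S → A → S → ℝ)
    (hT0 : ∀ s a s', 0 ≤ T s a s')
    (hT1 : ∀ s a, ∑ s', T s a s' = 1)
    (γ : ℝ) (hγ0 : 0 ≤ γ) (hγ1 : γ < 1)
    (R : S → A → S → ℝ) (Φ : S → ℝ)
    (π : S → A → ℝ)
    (hπ0 : ∀ s a, 0 ≤ π s a)
    (hπ1 : ∀ s, ∑ a, π s a = 1)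
    (Qπ Qπ' : S → A → ℝ) (Vπ Vπ' : S → ℝ)
    (hQπ : ∀ s a, Qπ s a = ∑ s', T s a s' * (R s a s' + γ * ∑ a', π s' a' * Qπ s' a'))
    (hQπ' : ∀ s a, Qπ' s a =
      ∑ s', T s a s' * ((R s a s' + γ * Φ s' - Φ s) + γ * ∑ a', π s' a' * Qπ' s' a'))
    (hVπ : ∀ s, Vπ s = ∑ a, π s a * Qπ s a)
    (hVπ' : ∀ s, Vπ' s = ∑ a, π s a * Qπ' s a) :
    (∀ s a, Qπ' s a = Qπ s a - Φ s) ∧ (∀ s, Vπ' s = Vπ s - Φ s) := by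
  set D : S → A → ℝ := fun s a => Qπ' s a - (Qπ s a - Φ s) with hD
  have key : ∀ s a, D s a = ∑ s', T s a s' * (γ * ∑ a', π s' a' * D s' a') := by
    intro s a
    have hΦ : ∑ s', T s a s' * Φ s = Φ s := by
      rw [← Finset.sum_mul, hT1, one_mul]
    have step : ∀ s' : S,
        T s a s' * ((R s a s' + γ * Φ s' - Φ s) + γ * ∑ a', π s' a' * Qπ' s' a')
        = T s a s' * (R s a s' + γ * ∑ a', π s' a' * Qπ s' a') - T s a s' * Φ s
          + T s a s' * (γ * ∑ a', π s' a' * (Qπ' s' a' - (Qπ s' a' - Φ s'))) := by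
      intro s'
      have h1 : (∑ a', π s' a' * (Qπ' s' a' - (Qπ s' a' - Φ s')))
          = (∑ a', π s' a' * Qπ' s' a') - (∑ a', π s' a' * Qπ s' a') + Φ s' := by
        rw [show (∑ a', π s' a' * (Qπ' s' a' - (Qπ s' a' - Φ s')))
            = (∑ a', (π s' a' * Qπ' s' a' - π s' a' * Qπ s' a' + π s' a' * Φ s')) by
          apply Finset.sum_congr rfl; intros; ring]
        rw [Finset.sum_add_distrib, Finset.sum_sub_distrib, ← Finset.sum_mul, hπ1 s']
        ring
      rw [h1]
      ring
    simp only [hD]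
    rw [hQπ' s a, hQπ s a, Finset.sum_congr rfl fun s' _ => step s',
      Finset.sum_add_distrib, Finset.sum_sub_distrib, hΦ]
    ring
  have hzero : ∀ s a, D s a = 0 := by
    intro s a
    have hSne : Nonempty S := ⟨s⟩
    have hne : (Finset.univ : Finset (S × A)).Nonempty := Finset.univ_nonempty
    set M : ℝ := (Finset.univ : Finset (S × A)).sup' hne (fun p => |D p.1 p.2|) with hM
    have hle : ∀ s a, |D s a| ≤ M := fun s a =>
      Finset.le_sup' (f := fun p : S × A => |D p.1 p.2|) (Finset.mem_univ (s, a))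
    have hM0 : 0 ≤ M := le_trans (abs_nonneg _) (hle s a)
    have hbound : ∀ s a, |D s a| ≤ γ * M := by
      intro s a
      rw [key s a]
      calc |∑ s', T s a s' * (γ * ∑ a', π s' a' * D s' a')|
          ≤ ∑ s', |T s a s' * (γ * ∑ a', π s' a' * D s' a')| :=
            Finset.abs_sum_le_sum_abs _ _
        _ ≤ ∑ s', T s a s' * (γ * M) := by
            apply Finset.sum_le_sum
            intro s' _
            rw [abs_mul, abs_of_nonneg (hT0 s a s')]
            apply mul_le_mul_of_nonneg_left _ (hT0 s a s')
            rw [abs_mul, abs_of_nonneg hγ0]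
            apply mul_le_mul_of_nonneg_left _ hγ0
            calc |∑ a', π s' a' * D s' a'| ≤ ∑ a', |π s' a' * D s' a'| :=
                  Finset.abs_sum_le_sum_abs _ _
              _ ≤ ∑ a', π s' a' * M := by
                  apply Finset.sum_le_sum
                  intro a' _
                  rw [abs_mul, abs_of_nonneg (hπ0 s' a')]
                  exact mul_le_mul_of_nonneg_left (hle s' a') (hπ0 s' a')
              _ = M := by rw [← Finset.sum_mul, hπ1 s', one_mul]
        _ = γ * M := by rw [← Finset.sum_mul, hT1 s a, one_mul]
    have hMle : M ≤ γ * M := by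
      obtain ⟨p, _, hp⟩ := Finset.exists_mem_eq_sup' hne (fun p : S × A => |D p.1 p.2|)
      calc M = |D p.1 p.2| := hp
        _ ≤ γ * M := hbound p.1 p.2
    have hMeq : M = 0 := le_antisymm (by nlinarith) hM0
    have := hle s a
    rw [hMeq] at this
    exact abs_eq_zero.mp (le_antisymm this (abs_nonneg _))
  constructor
  · intro s a
    have := hzero s a
    simp only [hD] at this
    linarith
  · intro s
    rw [hVπ' s, hVπ s]
    have hq : ∀ a, Qπ' s a = Qπ s a - Φ s := by
      intro a; have := hzero s a; simp only [hD] at this; linarith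
    rw [show (∑ a, π s a * Qπ' s a) = ∑ a, (π s a * Qπ s a - π s a * Φ s) by
      apply Finset.sum_congr rfl; intro a _; rw [hq a]; ring]
    rw [Finset.sum_sub_distrib, ← Finset.sum_mul, hπ1 s]
    ring
end

section
/- If a shaping function F : S × A × S → ℝ depends only on (s, s') (i.e., F(s,a,s') = G(s,s')) and preserves the identity Q*_{M'} = Q*_M − Φ for some Φ : S → ℝ on all MDPs over (S, A, T, γ), in particular on deterministic single-transition MDPs, then F must satisfy E-consistency F(s,a,s') = γΦ(s') − Φ(s) on all reachable transitions of any deterministic MDP. -/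
/-!
Send every state-action pair to the fixed state `z = t s a`. With zero reward the optimal
Q-function is `0`; with reward `F` it is `F u b z + γ V`, where the value `V` of `z` solves
`V = (⨆ b, F z b z) + γ V`. Invariance at `z` forces `V = -Φ z`, and invariance at `(s, a)`
then reads `F s a z + γ V = -Φ s`.
-/

section ConstTransition

variable {S A : Type*} (γ : ℝ) (r : S → A → ℝ) (z : S)

/-- The optimal Q-function when every transition leads to `z` and action `b` at `u` earns
`r u b`; the value of `z` is the fixed point `(⨆ b, r z b) / (1 - γ)` of `V ↦ ⨆ b, r z b + γ V`. -/
noncomputable def constTransitionQ (u : S) (b : A) : ℝ :=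
  r u b + γ * ((⨆ b', r z b') / (1 - γ))

theorem constTransitionQ_zero : constTransitionQ γ (fun _ _ ↦ (0 : ℝ)) z = (0 : S → A → ℝ) := by
  ext u b
  simp [constTransitionQ]

variable {γ} [Finite A] [Nonempty A]

theorem iSup_constTransitionQ (hγ : γ ≠ 1) :
    ⨆ b, constTransitionQ γ r z z b = (⨆ b, r z b) / (1 - γ) := by
  have hγ' : 1 - γ ≠ 0 := sub_ne_zero.mpr hγ.symm
  calc ⨆ b, (r z b + γ * ((⨆ b, r z b) / (1 - γ)))
      = (⨆ b, r z b) + γ * ((⨆ b, r z b) / (1 - γ)) :=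
        ((OrderIso.addRight _).map_ciSup (Set.finite_range _).bddAbove).symm
    _ = (⨆ b, r z b) / (1 - γ) := by field_simp; ring

theorem constTransitionQ_bellman (hγ : γ ≠ 1) (u : S) (b : A) :
    constTransitionQ γ r z u b = r u b + γ * ⨆ b', constTransitionQ γ r z z b' := by
  rw [iSup_constTransitionQ r z hγ]
  rfl

end ConstTransition

theorem potential_shaping_necessity_deterministic_general
    {S A : Type*} [Fintype A] [Nonempty A]
    (γ : ℝ) (hγ1 : γ < 1)
    (F : S → A → S → ℝ)
    (Φ : S → ℝ)
    (hinv : ∀ (t : S → A → S) (R : S → A → S → ℝ) (Q Q' : S → A → ℝ),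
      (∀ s a, Q s a = R s a (t s a) + γ * ⨆ a', Q (t s a) a') →
      (∀ s a, Q' s a = R s a (t s a) + F s a (t s a) + γ * ⨆ a', Q' (t s a) a') →
      ∀ s a, Q' s a = Q s a - Φ s) :
    ∀ (t : S → A → S) (s : S) (a : A), F s a (t s a) = γ * Φ (t s a) - Φ s := by
  intro t s a
  set z := t s a
  have hγ : γ ≠ 1 := hγ1.ne
  have key := hinv (fun _ _ ↦ z) (fun _ _ _ ↦ 0) _ (constTransitionQ γ (fun u b ↦ F u b z) z)
    (constTransitionQ_bellman _ z hγ) (by simpa using constTransitionQ_bellman _ z hγ)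
  simp only [constTransitionQ_zero, Pi.zero_apply, zero_sub] at key
  have hV : -Φ z = (⨆ b, F z b z) / (1 - γ) := by
    simpa only [key, ciSup_const] using iSup_constTransitionQ (fun u b ↦ F u b z) z hγ
  have hsa := key s a
  rw [constTransitionQ, ← hV] at hsa
  linarith

/-- Necessity direction (deterministic case) of the policy-invariance theorem:
if a shaping function `F` depends only on `(s, s')` and, for every deterministic
transition function and every reward function, the shaped optimal Q-function
equals the original optimal Q-function minus `Φ`, then
`F s a (t s a) = γ * Φ (t s a) - Φ s` on all reachable transitions of any
deterministic MDP. -/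
theorem potential_shaping_necessity_deterministic
    {S A : Type*} [Fintype S] [Fintype A] [Nonempty A]
    (γ : ℝ) (hγ0 : 0 < γ) (hγ1 : γ < 1)
    (F : S → A → S → ℝ) (G : S → S → ℝ)
    (hF : ∀ s a s', F s a s' = G s s')
    (Φ : S → ℝ)
    (hinv : ∀ (t : S → A → S) (R : S → A → S → ℝ) (Q Q' : S → A → ℝ),
      (∀ s a, Q s a = R s a (t s a) + γ * ⨆ a', Q (t s a) a') →
      (∀ s a, Q' s a = R s a (t s a) + F s a (t s a) + γ * ⨆ a', Q' (t s a) a') →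
      ∀ s a, Q' s a = Q s a - Φ s) :
    ∀ (t : S → A → S) (s : S) (a : A), F s a (t s a) = γ * Φ (t s a) - Φ s :=
  potential_shaping_necessity_deterministic_general γ hγ1 F Φ hinv
end
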